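/- arXiv:1908.04618 — 5 statements merged into one kernel-verified Lean document; each statement's English description precedes it below -/
import Mathlib

section
/- Let F be a field of odd characteristic, and let t ∈ F with t ≠ 0. The group SO₂(F) of matrices [[u,−v],[v,u]] with u²+v²=1 acts simply transitively on the level set {z ∈ F² : z₁² + z₂² = t}: for any two vectors x, y with ‖x‖² = ‖y‖² = t, there is a unique g ∈ SO₂(F) with gx = y. -/
/-!
Identify `F²` with `F[i]`: the rotation `!![u, -v; v, u]` is multiplication by `u + v i`, so
`g x = y` forces `u + v i = y x̄ / t`, which exists because `t = x x̄ ≠ 0`, and has norm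
`‖y‖² ‖x‖² / t² = 1` by multiplicativity of the norm.
-/

open Matrix

theorem rotation_mulVec_eq_iff {F : Type*} [Field F] {t : F} (ht : t ≠ 0) {x y : Fin 2 → F}
    (hx : x 0 ^ 2 + x 1 ^ 2 = t) (u v : F) :
    !![u, -v; v, u] *ᵥ x = y ↔
      u = (x 0 * y 0 + x 1 * y 1) / t ∧ v = (x 0 * y 1 - x 1 * y 0) / t := by
  simp only [mulVec_fin_two, of_apply, cons_val', cons_val_zero, cons_val_one, cons_val_fin_one,
    empty_val', funext_iff, Fin.forall_fin_two]
  rw [eq_div_iff ht, eq_div_iff ht]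
  constructor
  · rintro ⟨h0, h1⟩
    constructor
    · linear_combination x 0 * h0 + x 1 * h1 - u * hx
    · linear_combination x 0 * h1 - x 1 * h0 - v * hx
  · rintro ⟨hu, hv⟩
    refine ⟨mul_left_cancel₀ ht ?_, mul_left_cancel₀ ht ?_⟩
    · linear_combination x 0 * hu - x 1 * hv + y 0 * hx
    · linear_combination x 1 * hu + x 0 * hv + y 1 * hx

theorem div_sq_add_div_sq_eq_one {F : Type*} [Field F] {t : F} (ht : t ≠ 0) {x y : Fin 2 → F}
    (hx : x 0 ^ 2 + x 1 ^ 2 = t) (hy : y 0 ^ 2 + y 1 ^ 2 = t) :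
    ((x 0 * y 0 + x 1 * y 1) / t) ^ 2 + ((x 0 * y 1 - x 1 * y 0) / t) ^ 2 = 1 := by
  have brahmagupta := @sq_add_sq_mul_sq_add_sq _ _ (x 0) (x 1) (y 0) (-y 1)
  rw [hx, neg_sq, hy] at brahmagupta
  rw [div_pow, div_pow, ← add_div, div_eq_one_iff_eq (pow_ne_zero 2 ht), sq t, brahmagupta]
  ring

theorem SO2_simply_transitive_general (F : Type*) [Field F]
    (t : F) (ht : t ≠ 0) (x y : Fin 2 → F)
    (hx : (x 0) ^ 2 + (x 1) ^ 2 = t) (hy : (y 0) ^ 2 + (y 1) ^ 2 = t) :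
    ∃! g : Matrix (Fin 2) (Fin 2) F,
      (∃ u v : F, u ^ 2 + v ^ 2 = 1 ∧ g = !![u, -v; v, u]) ∧ g.mulVec x = y := by
  set u₀ := (x 0 * y 0 + x 1 * y 1) / t
  set v₀ := (x 0 * y 1 - x 1 * y 0) / t
  refine ⟨!![u₀, -v₀; v₀, u₀],
    ⟨⟨u₀, v₀, div_sq_add_div_sq_eq_one ht hx hy, rfl⟩,
      (rotation_mulVec_eq_iff ht hx u₀ v₀).2 ⟨rfl, rfl⟩⟩, ?_⟩
  rintro g ⟨⟨u, v, -, rfl⟩, hg⟩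
  obtain ⟨rfl, rfl⟩ := (rotation_mulVec_eq_iff ht hx u v).1 hg
  rfl

theorem SO2_simply_transitive (F : Type*) [Field F] (hchar : (2 : F) ≠ 0)
    (t : F) (ht : t ≠ 0) (x y : Fin 2 → F)
    (hx : (x 0) ^ 2 + (x 1) ^ 2 = t) (hy : (y 0) ^ 2 + (y 1) ^ 2 = t) :
    ∃! g : Matrix (Fin 2) (Fin 2) F,
      (∃ u v : F, u ^ 2 + v ^ 2 = 1 ∧ g = !![u, -v; v, u]) ∧ g.mulVec x = y :=
  SO2_simply_transitive_general F t ht x y hx hy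
end

section
/- Let F be a field of odd characteristic and let a, b ∈ F² with d(a,b) ≠ 0. Then the perpendicular bisector B(a,b) = {x ∈ F² : d(a,x) = d(b,x)} is a line in F² whose direction vector w = (w₁,w₂) is non-isotropic, i.e. w₁² + w₂² ≠ 0. -/
theorem bisector_is_nonisotropic_line (F : Type*) [Field F] (hchar : (2 : F) ≠ 0)
    (a b : F × F) (hab : (a.1 - b.1) ^ 2 + (a.2 - b.2) ^ 2 ≠ 0) :
    ∃ p w : F × F, w ≠ 0 ∧ w.1 ^ 2 + w.2 ^ 2 ≠ 0 ∧
      {x : F × F | (a.1 - x.1) ^ 2 + (a.2 - x.2) ^ 2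
          = (b.1 - x.1) ^ 2 + (b.2 - x.2) ^ 2}
        = {x : F × F | ∃ c : F, x = (p.1 + c * w.1, p.2 + c * w.2)} := by
  set u1 := a.1 - b.1 with hu1
  set u2 := a.2 - b.2 with hu2
  refine ⟨((a.1 + b.1) / 2, (a.2 + b.2) / 2), (-u2, u1), ?_, ?_, ?_⟩
  · intro h
    have h1 : -u2 = 0 := congrArg Prod.fst h
    have h2 : u1 = 0 := congrArg Prod.snd h
    apply hab
    simp only [h2, neg_eq_zero.mp h1]
    ring
  · simpa [add_comm] using hab
  · ext x
    simp only [Set.mem_setOf_eq]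
    constructor
    · intro h
      refine ⟨(u1 * (2 * x.2 - (a.2 + b.2)) - u2 * (2 * x.1 - (a.1 + b.1))) /
        (2 * (u1 ^ 2 + u2 ^ 2)), ?_⟩
      have key : u1 * (2 * x.1 - (a.1 + b.1)) + u2 * (2 * x.2 - (a.2 + b.2)) = 0 := by
        linear_combination -h
      have e1 : x.1 = (a.1 + b.1) / 2 +
          (u1 * (2 * x.2 - (a.2 + b.2)) - u2 * (2 * x.1 - (a.1 + b.1))) /
            (2 * (u1 ^ 2 + u2 ^ 2)) * -u2 := by
        field_simp [hchar, hab]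
        linear_combination u1 * key
      have e2 : x.2 = (a.2 + b.2) / 2 +
          (u1 * (2 * x.2 - (a.2 + b.2)) - u2 * (2 * x.1 - (a.1 + b.1))) /
            (2 * (u1 ^ 2 + u2 ^ 2)) * u1 := by
        field_simp [hchar, hab]
        linear_combination u2 * key
      exact Prod.ext e1 e2
    · rintro ⟨c, rfl⟩
      simp only [hu1, hu2]
      field_simp [hchar]
      ring
end

section
/- Let F be a field of odd characteristic and a, b, b' ∈ F² with d(a,b) = d(a,b') and b ≠ b'. If b − b' is isotropic (i.e. d(b,b') = 0), then d(a,b) = d(a,b') = 0. -/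
/-! Put `u = b - b'` and `v = a - b`. Expanding `d(a, b') = |v + u|²` with `u` isotropic turns
`d(a, b) = d(a, b')` into `2 (v · u) = 0`, so `v ⟂ u`. A nonzero isotropic `u` has `u₁ ≠ 0`, and
`u₁² |v|² = (v₂ u₂)² + v₂² u₁² = v₂² (u₁² + u₂²) = 0` because `v₁ u₁ = -v₂ u₂`. -/

section IsotropicPlane

variable {R : Type*} [CommRing R] [NoZeroDivisors R] {x y u w : R}

theorem eq_zero_iff_eq_zero_of_sq_add_sq_eq_zero (h : x ^ 2 + y ^ 2 = 0) : x = 0 ↔ y = 0 := by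
  constructor <;> rintro rfl <;> simpa using h

theorem sq_add_sq_eq_zero_of_mul_add_mul_eq_zero (hiso : u ^ 2 + w ^ 2 = 0) (hu : u ≠ 0)
    (horth : x * u + y * w = 0) : x ^ 2 + y ^ 2 = 0 := by
  have h : (x ^ 2 + y ^ 2) * u ^ 2 = 0 := by
    linear_combination (x * u - y * w) * horth + y ^ 2 * hiso
  exact (mul_eq_zero.mp h).resolve_right (pow_ne_zero 2 hu)

end IsotropicPlane

theorem isosceles_isotropic_base (F : Type*) [Field F] (hchar : (2 : F) ≠ 0)
    (a b b' : F × F) (hne : b ≠ b')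
    (hiso : (b.1 - b'.1) ^ 2 + (b.2 - b'.2) ^ 2 = 0)
    (heq : (a.1 - b.1) ^ 2 + (a.2 - b.2) ^ 2 = (a.1 - b'.1) ^ 2 + (a.2 - b'.2) ^ 2) :
    (a.1 - b.1) ^ 2 + (a.2 - b.2) ^ 2 = 0 ∧
    (a.1 - b'.1) ^ 2 + (a.2 - b'.2) ^ 2 = 0 := by
  have hu : b.1 - b'.1 ≠ 0 := fun h ↦ hne <| Prod.ext (sub_eq_zero.mp h)
    (sub_eq_zero.mp ((eq_zero_iff_eq_zero_of_sq_add_sq_eq_zero hiso).mp h))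
  have horth : (a.1 - b.1) * (b.1 - b'.1) + (a.2 - b.2) * (b.2 - b'.2) = 0 := by
    have h2 : 2 * ((a.1 - b.1) * (b.1 - b'.1) + (a.2 - b.2) * (b.2 - b'.2)) = 0 := by
      linear_combination -heq - hiso
    exact (mul_eq_zero.mp h2).resolve_left hchar
  have hab := sq_add_sq_eq_zero_of_mul_add_mul_eq_zero hiso hu horth
  exact ⟨hab, heq ▸ hab⟩
end

section
/- Let F be a field of odd characteristic. Every element of the group SE₂(F) of positively oriented rigid motions of the plane, given by matrices [[u,−v,s],[v,u,t],[0,0,1]] with u²+v²=1, arises as the image [X₀:X₁:X₂:X₃] = [2(u+1) : 2v : s(u+1)+tv : sv−t(u+1)] when u ≠ −1, and this point satisfies X₀²+X₁² ≠ 0 with inverse formulas u = (X₀²−X₁²)/(X₀²+X₁²), v = 2X₀X₁/(X₀²+X₁²), s/2 = (X₁X₃+X₀X₂)/(X₀²+X₁²), t/2 = (X₁X₂−X₀X₃)/(X₀²+X₁²). -/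
theorem kinematic_map_formulas (F : Type*) [Field F] (hchar : (2 : F) ≠ 0)
    (u v s t : F) (huv : u ^ 2 + v ^ 2 = 1) (hu : u ≠ -1) :
    (2 * (u + 1)) ^ 2 + (2 * v) ^ 2 ≠ 0 ∧
    u = ((2 * (u + 1)) ^ 2 - (2 * v) ^ 2) / ((2 * (u + 1)) ^ 2 + (2 * v) ^ 2) ∧
    v = 2 * (2 * (u + 1)) * (2 * v) / ((2 * (u + 1)) ^ 2 + (2 * v) ^ 2) ∧
    s / 2 = ((2 * v) * (s * v - t * (u + 1)) + (2 * (u + 1)) * (s * (u + 1) + t * v)) /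
        ((2 * (u + 1)) ^ 2 + (2 * v) ^ 2) ∧
    t / 2 = ((2 * v) * (s * (u + 1) + t * v) - (2 * (u + 1)) * (s * v - t * (u + 1))) /
        ((2 * (u + 1)) ^ 2 + (2 * v) ^ 2) := by
  have hu1 : u + 1 ≠ 0 := fun h => hu (by linear_combination h)
  have hden : (2 * (u + 1)) ^ 2 + (2 * v) ^ 2 = 8 * (u + 1) := by
    linear_combination 4 * huv
  have h8 : (8 : F) * (u + 1) ≠ 0 := by
    have h2 : (8 : F) = 2 * 2 * 2 := by norm_num
    exact mul_ne_zero (by rw [h2]; exact mul_ne_zero (mul_ne_zero hchar hchar) hchar) hu1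
  rw [hden]
  have h8' : (8 : F) ≠ 0 := left_ne_zero_of_mul h8
  refine ⟨h8, ?_, ?_, ?_, ?_⟩ <;> field_simp
  · linear_combination (4 : F) * huv
  · ring
  · linear_combination (-4 * s) * huv
  · linear_combination (-4 * t) * huv
end

section
/- Let F be an algebraically closed field (or any field where κ and the projective-translation property hold). For any points x, y ∈ F², the set T_{xy} = {g ∈ SE₂(F) : g(x) = y} maps under the kinematic mapping κ to a subset of a projective line in PF³. -/
/-!
Combining the two coordinate equations of `g.act x = y` with weights `u + 1` and `v` and using
`u² + v² = 1` shows that for `u ≠ -1` the kinematic image of `g` is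
`(u + 1) • P + v • Q` for two vectors `P`, `Q` depending only on `x` and `y`, while a half-turn
(`u = -1`, hence `v = 0`) is sent to `Q` itself. In characteristic `≠ 2` the vectors `P` and `Q`
are independent, so all of `T_{xy}` lands on the projective line they span.
-/

/-- A positively oriented rigid motion `x ↦ Rx + (s,t)` of the plane, with
rotation `R = [[u,-v],[v,u]]`, `u² + v² = 1`. -/
structure SE2 (F : Type*) [Field F] where
  u : F
  v : F
  s : F
  t : F
  huv : u ^ 2 + v ^ 2 = 1

/-- The action of a rigid motion on a point of the plane. -/
def SE2.act {F : Type*} [Field F] (g : SE2 F) (x : F × F) : F × F :=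
  (g.u * x.1 - g.v * x.2 + g.s, g.v * x.1 + g.u * x.2 + g.t)

open Classical in
/-- Homogeneous coordinates of the Blaschke–Grünwald kinematic mapping. -/
noncomputable def kvec {F : Type*} [Field F] (g : SE2 F) : Fin 4 → F :=
  if g.u = -1 then ![0, 2, g.t, g.s]
  else ![2 * (g.u + 1), 2 * g.v, g.s * (g.u + 1) + g.t * g.v,
         g.s * g.v - g.t * (g.u + 1)]

section TransporterLine

variable {F : Type*} [Field F]

theorem SE2.v_eq_zero_of_u_eq_neg_one (g : SE2 F) (hu : g.u = -1) : g.v = 0 :=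
  pow_eq_zero_iff two_ne_zero |>.mp <| by linear_combination g.huv - (g.u - 1) * hu

/-- Half of `kvec` of the translation by `y - x`. -/
def transporterLineP (x y : F × F) : Fin 4 → F := ![2, 0, y.1 - x.1, x.2 - y.2]

/-- `kvec` of the half-turn about the midpoint of `x` and `y`. -/
def transporterLineQ (x y : F × F) : Fin 4 → F := ![0, 2, y.2 + x.2, y.1 + x.1]

theorem linearIndependent_transporterLine (h2 : (2 : F) ≠ 0) (x y : F × F) :
    LinearIndependent F ![transporterLineP x y, transporterLineQ x y] := by
  rw [LinearIndependent.pair_iff]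
  intro a b h
  have h0 : a * 2 = 0 := by simpa [transporterLineP, transporterLineQ] using congrFun h 0
  have h1 : b * 2 = 0 := by simpa [transporterLineP, transporterLineQ] using congrFun h 1
  exact ⟨(mul_eq_zero.mp h0).resolve_right h2, (mul_eq_zero.mp h1).resolve_right h2⟩

variable {g : SE2 F} {x y : F × F}

theorem kvec_eq_transporterLineQ_of_act_eq (hg : g.act x = y) (hu : g.u = -1) :
    kvec g = transporterLineQ x y := by
  have h1 : g.u * x.1 - g.v * x.2 + g.s = y.1 := congrArg Prod.fst hg
  have h2 : g.v * x.1 + g.u * x.2 + g.t = y.2 := congrArg Prod.snd hg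
  have hv := g.v_eq_zero_of_u_eq_neg_one hu
  rw [kvec, if_pos hu, transporterLineQ]
  ext i
  fin_cases i <;> simp only [Fin.reduceFinMk, Matrix.cons_val]
  · linear_combination h2 - x.1 * hv - x.2 * hu
  · linear_combination h1 + x.2 * hv - x.1 * hu

theorem kvec_eq_transporterLine_of_act_eq (hg : g.act x = y) (hu : g.u ≠ -1) :
    kvec g = (g.u + 1) • transporterLineP x y + g.v • transporterLineQ x y := by
  have h1 : g.u * x.1 - g.v * x.2 + g.s = y.1 := congrArg Prod.fst hg
  have h2 : g.v * x.1 + g.u * x.2 + g.t = y.2 := congrArg Prod.snd hg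
  rw [kvec, if_neg hu, transporterLineP, transporterLineQ]
  ext i
  fin_cases i <;>
    simp only [Fin.isValue, Fin.reduceFinMk, Matrix.cons_val, Pi.add_apply, Pi.smul_apply,
      smul_eq_mul]
  · ring
  · ring
  · linear_combination (g.u + 1) * h1 + g.v * h2 - x.1 * g.huv
  · linear_combination g.v * h1 - (g.u + 1) * h2 + x.2 * g.huv

end TransporterLine

theorem transporters_map_to_lines_general (F : Type*) [Field F]
    (hchar : (2 : F) ≠ 0) (x y : F × F) :
    ∃ P Q : Fin 4 → F, LinearIndependent F ![P, Q] ∧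
      ∀ g : SE2 F, g.act x = y →
        ∃ a b : F, ¬(a = 0 ∧ b = 0) ∧ kvec g = a • P + b • Q := by
  refine ⟨transporterLineP x y, transporterLineQ x y,
    linearIndependent_transporterLine hchar x y, fun g hg => ?_⟩
  by_cases hu : g.u = -1
  · exact ⟨0, 1, by simp, by simp [kvec_eq_transporterLineQ_of_act_eq hg hu]⟩
  · exact ⟨g.u + 1, g.v, fun h => hu (eq_neg_of_add_eq_zero_left h.1),
      kvec_eq_transporterLine_of_act_eq hg hu⟩

theorem transporters_map_to_lines (F : Type*) [Field F] [IsAlgClosed F]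
    (hchar : (2 : F) ≠ 0) (x y : F × F) :
    ∃ P Q : Fin 4 → F, LinearIndependent F ![P, Q] ∧
      ∀ g : SE2 F, g.act x = y →
        ∃ a b : F, ¬(a = 0 ∧ b = 0) ∧ kvec g = a • P + b • Q :=
  transporters_map_to_lines_general F hchar x y
end
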